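/- arXiv:1205.1075 — 6 statements merged into one kernel-verified Lean document; each statement's English description precedes it below -/
import Mathlib

section
/- Let ρ : [a,b] → ℝ be integrable with 0 < ρ_min ≤ ρ(x) ≤ ρ_max < ∞ for all x ∈ [a,b], where a < b. Then the weighted average A = (∫_a^b z ρ(z) dz) / (∫_a^b ρ(z) dz) satisfies A ≤ (a + b·√(ρ_max/ρ_min)) / (1 + √(ρ_max/ρ_min)) < b. -/
/-!
Put `c := (a + b r) / (1 + r)` with `r = √(ρmax/ρmin)`; it splits `[a, b]` in the ratio
`(c - a) : (b - c) = r : 1`. Bounding `ρ` below by `ρmin` on `[a, c]`, where `z - c ≤ 0`, and above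
by `ρmax` on `[c, b]` gives `∫ (z - c) ρ ≤ (ρmax (b - c)² - ρmin (c - a)²) / 2`, and the choice of
`r` makes the right-hand side vanish. Hence the centre of mass lies left of `c`.
-/

open MeasureTheory intervalIntegral Real

theorem integral_sub_mul_const (x y c k : ℝ) :
    ∫ z in x..y, (z - c) * k = k * ((y - c) ^ 2 - (x - c) ^ 2) / 2 := by
  rw [intervalIntegral.integral_mul_const,
    integral_sub intervalIntegrable_id intervalIntegrable_const, integral_id,
    intervalIntegral.integral_const, smul_eq_mul]
  ring

theorem integral_sub_mul_le_of_bounds {ρ : ℝ → ℝ} {a b c m M : ℝ} (hac : a ≤ c) (hcb : c ≤ b)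
    (hρ : IntervalIntegrable ρ volume a b) (hbd : ∀ x ∈ Set.Icc a b, m ≤ ρ x ∧ ρ x ≤ M) :
    ∫ z in a..b, (z - c) * ρ z ≤ (M * (b - c) ^ 2 - m * (c - a) ^ 2) / 2 := by
  have hg : IntervalIntegrable (fun z => (z - c) * ρ z) volume a b :=
    hρ.continuousOn_mul (by fun_prop)
  have hgac : IntervalIntegrable (fun z => (z - c) * ρ z) volume a c := by
    refine hg.mono_set ?_
    rw [Set.uIcc_of_le hac, Set.uIcc_of_le (hac.trans hcb)]
    exact Set.Icc_subset_Icc le_rfl hcb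
  have hgcb : IntervalIntegrable (fun z => (z - c) * ρ z) volume c b := by
    refine hg.mono_set ?_
    rw [Set.uIcc_of_le hcb, Set.uIcc_of_le (hac.trans hcb)]
    exact Set.Icc_subset_Icc hac le_rfl
  have hleft : ∫ z in a..c, (z - c) * ρ z ≤ ∫ z in a..c, (z - c) * m :=
    integral_mono_on hac hgac (Continuous.intervalIntegrable (by fun_prop) _ _) fun x hx =>
      mul_le_mul_of_nonpos_left (hbd x ⟨hx.1, hx.2.trans hcb⟩).1 (by linarith [hx.2])
  have hright : ∫ z in c..b, (z - c) * ρ z ≤ ∫ z in c..b, (z - c) * M :=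
    integral_mono_on hcb hgcb (Continuous.intervalIntegrable (by fun_prop) _ _) fun x hx =>
      mul_le_mul_of_nonneg_left (hbd x ⟨hac.trans hx.1, hx.2⟩).2 (by linarith [hx.1])
  rw [integral_sub_mul_const] at hleft hright
  rw [← integral_add_adjacent_intervals hgac hgcb]
  linarith

theorem div_integral_le_of_integral_sub_mul_nonpos {ρ : ℝ → ℝ} {a b c : ℝ}
    (hρ : IntervalIntegrable ρ volume a b) (hpos : 0 < ∫ z in a..b, ρ z)
    (h : ∫ z in a..b, (z - c) * ρ z ≤ 0) :
    (∫ z in a..b, z * ρ z) / (∫ z in a..b, ρ z) ≤ c := by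
  have hsplit : ∫ z in a..b, (z - c) * ρ z = (∫ z in a..b, z * ρ z) - c * ∫ z in a..b, ρ z := by
    simp only [sub_mul]
    rw [integral_sub (hρ.continuousOn_mul (by fun_prop)) (hρ.const_mul c),
      intervalIntegral.integral_const_mul]
  rw [div_le_iff₀ hpos]
  linarith

theorem div_one_add_sub_sq_eq (a b : ℝ) {r : ℝ} (hr : 1 + r ≠ 0) :
    ((a + b * r) / (1 + r) - a) ^ 2 = r ^ 2 * (b - (a + b * r) / (1 + r)) ^ 2 := by
  field_simp
  ring

theorem div_one_add_mem_Ico {a b r : ℝ} (hab : a < b) (hr : 0 ≤ r) :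
    (a + b * r) / (1 + r) ∈ Set.Ico a b := by
  have : 0 < 1 + r := by positivity
  rw [Set.mem_Ico, le_div_iff₀ this, div_lt_iff₀ this]
  constructor <;> nlinarith

theorem stmt_0 (a b ρmin ρmax : ℝ) (ρ : ℝ → ℝ)
    (hab : a < b) (hρmin : 0 < ρmin) (hρmax : ρmin ≤ ρmax)
    (hint : IntegrableOn ρ (Set.Icc a b))
    (hbd : ∀ x ∈ Set.Icc a b, ρmin ≤ ρ x ∧ ρ x ≤ ρmax) :
    (∫ z in a..b, z * ρ z) / (∫ z in a..b, ρ z) ≤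
      (a + b * Real.sqrt (ρmax / ρmin)) / (1 + Real.sqrt (ρmax / ρmin)) ∧
    (a + b * Real.sqrt (ρmax / ρmin)) / (1 + Real.sqrt (ρmax / ρmin)) < b := by
  set r := Real.sqrt (ρmax / ρmin)
  have hr : 0 ≤ r := sqrt_nonneg _
  have hρmin_r : ρmin * r ^ 2 = ρmax := by
    rw [sq_sqrt (div_nonneg (hρmin.le.trans hρmax) hρmin.le)]
    field_simp
  set c := (a + b * r) / (1 + r) with hc
  obtain ⟨hac, hcb⟩ : c ∈ Set.Ico a b := div_one_add_mem_Ico hab hr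
  have hρ : IntervalIntegrable ρ volume a b :=
    (intervalIntegrable_iff_integrableOn_Icc_of_le hab.le).2 hint
  have hpos : 0 < ∫ z in a..b, ρ z :=
    intervalIntegral_pos_of_pos_on hρ
      (fun x hx => hρmin.trans_le (hbd x (Set.Ioo_subset_Icc_self hx)).1) hab
  refine ⟨div_integral_le_of_integral_sub_mul_nonpos hρ hpos ?_, hcb⟩
  calc ∫ z in a..b, (z - c) * ρ z
      ≤ (ρmax * (b - c) ^ 2 - ρmin * (c - a) ^ 2) / 2 :=
        integral_sub_mul_le_of_bounds hac hcb.le hρ hbd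
    _ = 0 := by rw [hc, div_one_add_sub_sq_eq a b (by positivity), ← hρmin_r]; ring
end

section
/- Let ρ : [a,b] → ℝ be integrable with 0 < ρ_min ≤ ρ(x) ≤ ρ_max < ∞ for all x ∈ [a,b], where a < b. Then the weighted average A = (∫_a^b z ρ(z) dz) / (∫_a^b ρ(z) dz) satisfies a < (b + a·√(ρ_max/ρ_min)) / (1 + √(ρ_max/ρ_min)) ≤ A. -/
/-! The point `c = (b + a r) / (1 + r)`, `r = √(ρmax / ρmin)`, divides `[a, b]` in the
ratio `1 : r`, so that `ρmax (c - a)² = ρmin (b - c)²`. Bounding `ρ` above by `ρmax` left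
of `c` and below by `ρmin` right of `c` gives
`∫ (z - c) ρ ≥ ρmin (b - c)² / 2 - ρmax (c - a)² / 2 = 0`,
i.e. the centre of mass lies to the right of `c`. -/

open MeasureTheory intervalIntegral Real

section FirstMoment

variable {ρ : ℝ → ℝ} {a b c m M : ℝ}

theorem mul_sq_div_two_le_integral_sub_mul (hcb : c ≤ b) (hρ : IntervalIntegrable ρ volume c b)
    (hm : ∀ x ∈ Set.Icc c b, m ≤ ρ x) :
    m * (b - c) ^ 2 / 2 ≤ ∫ z in c..b, (z - c) * ρ z :=
  calc m * (b - c) ^ 2 / 2 = ∫ z in c..b, (z - c) * m := by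
        simp only [intervalIntegral.integral_mul_const, integral_sub intervalIntegrable_id
          intervalIntegrable_const, integral_id, intervalIntegral.integral_const, smul_eq_mul]
        ring
    _ ≤ ∫ z in c..b, (z - c) * ρ z :=
      integral_mono_on hcb ((by fun_prop : Continuous fun z => (z - c) * m).intervalIntegrable _ _)
        (hρ.continuousOn_mul (by fun_prop)) fun x hx =>
          mul_le_mul_of_nonneg_left (hm x hx) (sub_nonneg.2 hx.1)

theorem neg_mul_sq_div_two_le_integral_sub_mul (hac : a ≤ c)
    (hρ : IntervalIntegrable ρ volume a c) (hM : ∀ x ∈ Set.Icc a c, ρ x ≤ M) :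
    -(M * (c - a) ^ 2 / 2) ≤ ∫ z in a..c, (z - c) * ρ z :=
  calc -(M * (c - a) ^ 2 / 2) = ∫ z in a..c, (z - c) * M := by
        simp only [intervalIntegral.integral_mul_const, integral_sub intervalIntegrable_id
          intervalIntegrable_const, integral_id, intervalIntegral.integral_const, smul_eq_mul]
        ring
    _ ≤ ∫ z in a..c, (z - c) * ρ z :=
      integral_mono_on hac ((by fun_prop : Continuous fun z => (z - c) * M).intervalIntegrable _ _)
        (hρ.continuousOn_mul (by fun_prop)) fun x hx =>
          mul_le_mul_of_nonpos_left (hM x hx) (sub_nonpos.2 hx.2)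

theorem sub_le_integral_sub_mul (hc : c ∈ Set.Icc a b) (hρ : IntervalIntegrable ρ volume a b)
    (hbd : ∀ x ∈ Set.Icc a b, m ≤ ρ x ∧ ρ x ≤ M) :
    m * (b - c) ^ 2 / 2 - M * (c - a) ^ 2 / 2 ≤ ∫ z in a..b, (z - c) * ρ z := by
  obtain ⟨hac, hcb⟩ := hc
  have hρac : IntervalIntegrable ρ volume a c := hρ.mono_set (Set.uIcc_subset_uIcc_left
    (Set.mem_uIcc_of_le hac hcb))
  have hρcb : IntervalIntegrable ρ volume c b := hρ.mono_set (Set.uIcc_subset_uIcc_right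
    (Set.mem_uIcc_of_le hac hcb))
  have hleft := neg_mul_sq_div_two_le_integral_sub_mul hac hρac fun x hx =>
    (hbd x ⟨hx.1, hx.2.trans hcb⟩).2
  have hright := mul_sq_div_two_le_integral_sub_mul hcb hρcb fun x hx =>
    (hbd x ⟨hac.trans hx.1, hx.2⟩).1
  rw [← integral_add_adjacent_intervals (hρac.continuousOn_mul (by fun_prop))
    (hρcb.continuousOn_mul (by fun_prop))]
  linarith

theorem le_integral_mul_div_integral (hρ : IntervalIntegrable ρ volume a b)
    (hpos : 0 < ∫ z in a..b, ρ z) (hmoment : 0 ≤ ∫ z in a..b, (z - c) * ρ z) :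
    c ≤ (∫ z in a..b, z * ρ z) / ∫ z in a..b, ρ z := by
  have hsplit :
      ∫ z in a..b, (z - c) * ρ z = (∫ z in a..b, z * ρ z) - c * ∫ z in a..b, ρ z := by
    rw [← intervalIntegral.integral_const_mul,
      ← integral_sub (hρ.continuousOn_mul (by fun_prop)) (hρ.const_mul c)]
    simp only [sub_mul]
  rw [le_div_iff₀ hpos]
  linarith

end FirstMoment

section BalancePoint

variable {a b r : ℝ}

theorem div_one_add_mem_Ioc (hab : a < b) (hr : 0 ≤ r) :
    (b + a * r) / (1 + r) ∈ Set.Ioc a b := by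
  have h1r : 0 < 1 + r := by linarith
  constructor
  · rw [lt_div_iff₀ h1r]; linarith
  · rw [div_le_iff₀ h1r]; nlinarith

theorem mul_sq_sub_div_one_add_sqrt {m M : ℝ} (hm : 0 < m) (hM : 0 ≤ M) :
    M * ((b + a * √(M / m)) / (1 + √(M / m)) - a) ^ 2 =
      m * (b - (b + a * √(M / m)) / (1 + √(M / m))) ^ 2 := by
  have hr2 : m * √(M / m) ^ 2 = M := by rw [sq_sqrt (by positivity)]; field_simp
  have h1r : 1 + √(M / m) ≠ 0 := by positivity
  field_simp
  linear_combination (-(b - a) ^ 2) * hr2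

end BalancePoint

theorem stmt_1 (a b ρmin ρmax : ℝ) (ρ : ℝ → ℝ)
    (hab : a < b) (hρmin : 0 < ρmin) (hρmax : ρmin ≤ ρmax)
    (hint : IntegrableOn ρ (Set.Icc a b))
    (hbd : ∀ x ∈ Set.Icc a b, ρmin ≤ ρ x ∧ ρ x ≤ ρmax) :
    a < (b + a * Real.sqrt (ρmax / ρmin)) / (1 + Real.sqrt (ρmax / ρmin)) ∧
    (b + a * Real.sqrt (ρmax / ρmin)) / (1 + Real.sqrt (ρmax / ρmin)) ≤
      (∫ z in a..b, z * ρ z) / (∫ z in a..b, ρ z) := by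
  set c := (b + a * √(ρmax / ρmin)) / (1 + √(ρmax / ρmin))
  obtain ⟨hac, hcb⟩ : c ∈ Set.Ioc a b := div_one_add_mem_Ioc hab (sqrt_nonneg _)
  have hρ : IntervalIntegrable ρ volume a b :=
    (intervalIntegrable_iff_integrableOn_Icc_of_le hab.le).2 hint
  have hpos : 0 < ∫ z in a..b, ρ z :=
    intervalIntegral_pos_of_pos_on hρ
      (fun x hx => hρmin.trans_le (hbd x (Set.Ioo_subset_Icc_self hx)).1) hab
  refine ⟨hac, le_integral_mul_div_integral hρ hpos ?_⟩
  calc 0 = ρmin * (b - c) ^ 2 / 2 - ρmax * (c - a) ^ 2 / 2 := by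
        rw [mul_sq_sub_div_one_add_sqrt hρmin (hρmin.le.trans hρmax)]; ring
    _ ≤ ∫ z in a..b, (z - c) * ρ z := sub_le_integral_sub_mul ⟨hac.le, hcb⟩ hρ hbd
end

section
/- For the step density ρ_s on [a,b] defined by ρ_s(x) = ρ_min for x ∈ [a,c) and ρ_s(x) = ρ_max for x ∈ [c,b], with 0 < ρ_min ≤ ρ_max and a ≤ c ≤ b, the weighted average A(c) = ((c²−a²)ρ_min/2 + (b²−c²)ρ_max/2) / ((c−a)ρ_min + (b−c)ρ_max) attains its maximum over c ∈ [a,b] at c* = (a + b·√(ρ_max/ρ_min)) / (1 + √(ρ_max/ρ_min)), and the maximum value equals c*. -/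
/-!
Write `ρmax = s² ρmin` with `s = √(ρmax / ρmin) ≥ 1` and `c* = (a + b s) / (1 + s)`. Clearing
denominators in `A(c) = moment(c) / mass(c)`, the bound `A(c) ≤ c*` follows from the identity
`(a + b s) mass(c) - (1 + s) moment(c) = ρmin (s - 1) / 2 · (c - a - s (b - c))²`,
whose right-hand side is nonnegative and vanishes exactly at `c = c*`, so that also `A(c*) = c*`.
-/

open Real

noncomputable section

namespace StepDensity

variable (a b ρ₁ ρ₂ c : ℝ)

def moment : ℝ := (c ^ 2 - a ^ 2) * ρ₁ / 2 + (b ^ 2 - c ^ 2) * ρ₂ / 2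

def mass : ℝ := (c - a) * ρ₁ + (b - c) * ρ₂

def centerOfMass : ℝ := moment a b ρ₁ ρ₂ c / mass a b ρ₁ ρ₂ c

variable {a b ρ₁ ρ₂ c}

theorem mass_pos (hab : a < b) (h₁ : 0 < ρ₁) (h₂ : 0 < ρ₂) (hc : c ∈ Set.Icc a b) :
    0 < mass a b ρ₁ ρ₂ c := by
  unfold mass
  rcases hc.1.eq_or_lt with rfl | hac
  · simpa using mul_pos (sub_pos.2 hab) h₂
  · nlinarith [mul_pos (sub_pos.2 hac) h₁, mul_nonneg (sub_nonneg.2 hc.2) h₂.le]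

theorem mul_mass_sub_mul_moment (a b c r s : ℝ) :
    (a + b * s) * mass a b r (s ^ 2 * r) c - (1 + s) * moment a b r (s ^ 2 * r) c =
      r * (s - 1) / 2 * (c - a - s * (b - c)) ^ 2 := by
  unfold mass moment
  ring

theorem weightedMean_mem_Icc {s : ℝ} (hab : a ≤ b) (hs : 0 ≤ s) :
    (a + b * s) / (1 + s) ∈ Set.Icc a b := by
  have h : 0 < 1 + s := by linarith
  constructor
  · rw [le_div_iff₀ h]; nlinarith
  · rw [div_le_iff₀ h]; nlinarith

theorem centerOfMass_le {r s : ℝ} (hab : a < b) (hr : 0 < r) (hs : 1 ≤ s)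
    (hc : c ∈ Set.Icc a b) :
    centerOfMass a b r (s ^ 2 * r) c ≤ (a + b * s) / (1 + s) := by
  have hmass := mass_pos (ρ₂ := s ^ 2 * r) hab hr (by positivity) hc
  rw [centerOfMass, div_le_div_iff₀ hmass (by linarith)]
  nlinarith [mul_mass_sub_mul_moment a b c r s,
    mul_nonneg (mul_nonneg hr.le (sub_nonneg.2 hs)) (sq_nonneg (c - a - s * (b - c)))]

theorem centerOfMass_weightedMean {r s : ℝ} (hab : a < b) (hr : 0 < r) (hs : 0 < s) :
    centerOfMass a b r (s ^ 2 * r) ((a + b * s) / (1 + s)) = (a + b * s) / (1 + s) := by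
  have hmass := mass_pos (ρ₂ := s ^ 2 * r) hab hr (by positivity)
    (weightedMean_mem_Icc hab.le hs.le)
  have hbalance : (a + b * s) / (1 + s) - a - s * (b - (a + b * s) / (1 + s)) = 0 := by
    field_simp; ring
  have key := mul_mass_sub_mul_moment a b ((a + b * s) / (1 + s)) r s
  rw [hbalance] at key
  rw [centerOfMass, div_eq_div_iff hmass.ne' (by linarith)]
  linear_combination -key

end StepDensity

end

open StepDensity in
theorem stmt_3 (a b ρmin ρmax : ℝ) (hab : a < b) (hρmin : 0 < ρmin) (hρmax : ρmin ≤ ρmax)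
    (A : ℝ → ℝ)
    (hA : ∀ c, A c = ((c ^ 2 - a ^ 2) * ρmin / 2 + (b ^ 2 - c ^ 2) * ρmax / 2) /
      ((c - a) * ρmin + (b - c) * ρmax)) :
    (∀ c ∈ Set.Icc a b,
      A c ≤ A ((a + b * Real.sqrt (ρmax / ρmin)) / (1 + Real.sqrt (ρmax / ρmin)))) ∧
    A ((a + b * Real.sqrt (ρmax / ρmin)) / (1 + Real.sqrt (ρmax / ρmin))) =
      (a + b * Real.sqrt (ρmax / ρmin)) / (1 + Real.sqrt (ρmax / ρmin)) := by
  obtain ⟨s, hs⟩ : ∃ s, s = √(ρmax / ρmin) := ⟨_, rfl⟩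
  rw [← hs]
  have hs1 : 1 ≤ s := hs ▸ Real.one_le_sqrt.2 ((one_le_div hρmin).2 hρmax)
  have hρ : ρmax = s ^ 2 * ρmin := by
    rw [hs, sq_sqrt (div_nonneg (hρmin.le.trans hρmax) hρmin.le), div_mul_cancel₀ _ hρmin.ne']
  have hA' : A = centerOfMass a b ρmin (s ^ 2 * ρmin) := by
    rw [← hρ]; exact funext hA
  have hmax := centerOfMass_weightedMean hab hρmin (by linarith : 0 < s)
  rw [hA', hmax]
  exact ⟨fun c hc => centerOfMass_le hab hρmin hs1 hc, rfl⟩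
end

section
/- Let ρ : ℝ → ℝ be a nonnegative integrable function supported on a closed bounded interval [m, M] with ρ bounded between ρ_min > 0 and ρ_max < ∞ on [m, M], and let r > 0. Define the flow map γ(x) = (∫_{I(x)} z ρ(z) dz) / (∫_{I(x)} ρ(z) dz) where I(x) = [x−r, x+r] ∩ [m, M]. Then for all x, y ∈ [m, M] with x < y, we have γ(x) < γ(y). -/
open MeasureTheory Set

/-!
γ(x) is the centre of mass of ρ on the window `[max (x - r) m, min (x + r) M]`. Both ends of the
window are nondecreasing in x, and since `M - m > 2r` they cannot both stay put while x increases.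
As ρ > 0 there, the centre of mass of an interval lies strictly inside it; hence for adjacent
intervals `[a, b]`, `[b, c]` the centre of mass of `[a, c]`, a mediant of the two, lies strictly
between theirs. So growing the window to the right or shrinking it from the left strictly moves the
centre of mass to the right.
-/

theorem add_div_add_mem_Ioo {K : Type*} [Field K] [LinearOrder K] [IsStrictOrderedRing K]
    {a b c d : K} (hb : 0 < b) (hd : 0 < d) (h : a / b < c / d) :
    (a + c) / (b + d) ∈ Ioo (a / b) (c / d) := by
  rw [div_lt_div_iff₀ hb hd] at h
  rw [Set.mem_Ioo, div_lt_div_iff₀ hb (add_pos hb hd), div_lt_div_iff₀ (add_pos hb hd) hd]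
  constructor <;> linarith

noncomputable def centerOfMass (ρ : ℝ → ℝ) (a b : ℝ) : ℝ :=
  (∫ z in Icc a b, z * ρ z) / ∫ z in Icc a b, ρ z

section

variable {ρ : ℝ → ℝ} {a b c : ℝ}

theorem centerOfMass_eq_intervalIntegral (hab : a ≤ b) :
    centerOfMass ρ a b = (∫ z in a..b, z * ρ z) / ∫ z in a..b, ρ z := by
  simp only [centerOfMass, integral_Icc_eq_integral_Ioc, intervalIntegral.integral_of_le hab]

theorem centerOfMass_mem_Ioo (hab : a < b) (hint : IntegrableOn ρ (Icc a b))
    (hpos : ∀ z ∈ Ioo a b, 0 < ρ z) : centerOfMass ρ a b ∈ Ioo a b := by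
  have hρ : IntervalIntegrable ρ volume a b :=
    (intervalIntegrable_iff_integrableOn_Icc_of_le hab.le).2 hint
  have hmass : 0 < ∫ z in a..b, ρ z :=
    intervalIntegral.intervalIntegral_pos_of_pos_on hρ hpos hab
  have hmoment : IntervalIntegrable (fun z => z * ρ z) volume a b :=
    hρ.continuousOn_mul continuousOn_id
  have hleft : 0 < ∫ z in a..b, (z - a) * ρ z :=
    intervalIntegral.intervalIntegral_pos_of_pos_on (hρ.continuousOn_mul (by fun_prop))
      (fun z hz => mul_pos (sub_pos.2 hz.1) (hpos z hz)) hab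
  have hright : 0 < ∫ z in a..b, (b - z) * ρ z :=
    intervalIntegral.intervalIntegral_pos_of_pos_on (hρ.continuousOn_mul (by fun_prop))
      (fun z hz => mul_pos (sub_pos.2 hz.2) (hpos z hz)) hab
  simp only [sub_mul] at hleft hright
  rw [intervalIntegral.integral_sub hmoment (hρ.const_mul a),
    intervalIntegral.integral_const_mul] at hleft
  rw [intervalIntegral.integral_sub (hρ.const_mul b) hmoment,
    intervalIntegral.integral_const_mul] at hright
  rw [centerOfMass_eq_intervalIntegral hab.le, Set.mem_Ioo, lt_div_iff₀ hmass,
    div_lt_iff₀ hmass]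
  constructor <;> linarith

theorem centerOfMass_mem_Ioo_of_adjacent (hab : a < b) (hbc : b < c)
    (hint : IntegrableOn ρ (Icc a c)) (hpos : ∀ z ∈ Ioo a c, 0 < ρ z) :
    centerOfMass ρ a c ∈ Ioo (centerOfMass ρ a b) (centerOfMass ρ b c) := by
  have hintL := hint.mono_set (Icc_subset_Icc_right hbc.le)
  have hintR := hint.mono_set (Icc_subset_Icc_left hab.le)
  have hposL (z : ℝ) (hz : z ∈ Ioo a b) : 0 < ρ z := hpos z ⟨hz.1, hz.2.trans hbc⟩
  have hposR (z : ℝ) (hz : z ∈ Ioo b c) : 0 < ρ z := hpos z ⟨hab.trans hz.1, hz.2⟩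
  have hρL := (intervalIntegrable_iff_integrableOn_Icc_of_le hab.le).2 hintL
  have hρR := (intervalIntegrable_iff_integrableOn_Icc_of_le hbc.le).2 hintR
  have hmoment {s t : ℝ} (h : IntervalIntegrable ρ volume s t) :
      IntervalIntegrable (fun z => z * ρ z) volume s t :=
    h.continuousOn_mul continuousOn_id
  have hlt : centerOfMass ρ a b < centerOfMass ρ b c :=
    (centerOfMass_mem_Ioo hab hintL hposL).2.trans (centerOfMass_mem_Ioo hbc hintR hposR).1
  rw [centerOfMass_eq_intervalIntegral hab.le, centerOfMass_eq_intervalIntegral hbc.le] at hlt ⊢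
  rw [centerOfMass_eq_intervalIntegral (hab.trans hbc).le,
    ← intervalIntegral.integral_add_adjacent_intervals hρL hρR,
    ← intervalIntegral.integral_add_adjacent_intervals (hmoment hρL) (hmoment hρR)]
  exact add_div_add_mem_Ioo (intervalIntegral.intervalIntegral_pos_of_pos_on hρL hposL hab)
    (intervalIntegral.intervalIntegral_pos_of_pos_on hρR hposR hbc) hlt

theorem centerOfMass_lt_centerOfMass {a' b' : ℝ} (ha : a ≤ a') (hb : b ≤ b')
    (hne : a < a' ∨ b < b') (hab : a < b) (hab' : a' < b') (hint : IntegrableOn ρ (Icc a b'))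
    (hpos : ∀ z ∈ Ioo a b', 0 < ρ z) : centerOfMass ρ a b < centerOfMass ρ a' b' := by
  rcases ha.lt_or_eq with ha | rfl <;> rcases hb.lt_or_eq with hb | rfl
  · exact (centerOfMass_mem_Ioo_of_adjacent hab hb hint hpos).1.trans
      (centerOfMass_mem_Ioo_of_adjacent ha hab' hint hpos).2
  · exact (centerOfMass_mem_Ioo_of_adjacent ha hab' hint hpos).2
  · exact (centerOfMass_mem_Ioo_of_adjacent hab hb hint hpos).1
  · simp at hne

end

theorem stmt_6_general (m M r ρmin ρmax : ℝ) (ρ : ℝ → ℝ)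
    (hr : 0 < r) (hMm : M - m > 2 * r)
    (hint : IntegrableOn ρ (Set.Icc m M))
    (hρmin : 0 < ρmin)
    (hbd : ∀ x ∈ Set.Icc m M, ρmin ≤ ρ x ∧ ρ x ≤ ρmax)
    (γ : ℝ → ℝ)
    (hγ : ∀ x, γ x = (∫ z in Set.Icc (x - r) (x + r) ∩ Set.Icc m M, z * ρ z) /
      (∫ z in Set.Icc (x - r) (x + r) ∩ Set.Icc m M, ρ z)) :
    ∀ x ∈ Set.Icc m M, ∀ y ∈ Set.Icc m M, x < y → γ x < γ y := by
  have hγ_eq (x : ℝ) : γ x = centerOfMass ρ (max (x - r) m) (min (x + r) M) := by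
    rw [hγ, Icc_inter_Icc, centerOfMass]
  have hwindow (x : ℝ) (hx : x ∈ Icc m M) : max (x - r) m < min (x + r) M :=
    max_lt (lt_min (by linarith) (by linarith [hx.2])) (lt_min (by linarith [hx.1]) (by linarith))
  rintro x hx y hy hxy
  have hwindow_moves : max (x - r) m < max (y - r) m ∨ min (x + r) M < min (y + r) M := by
    by_contra! h
    have hlow : y - r ≤ m := by
      rcases le_max_iff.1 ((le_max_left _ _).trans h.1) with h' | h' <;> linarith
    have hhigh : M ≤ x + r := by
      rcases min_le_iff.1 (h.2.trans (min_le_left _ _)) with h' | h' <;> linarith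
    linarith
  rw [hγ_eq, hγ_eq]
  refine centerOfMass_lt_centerOfMass (by gcongr) (by gcongr) hwindow_moves (hwindow x hx)
    (hwindow y hy) (hint.mono_set (Icc_subset_Icc (le_max_right _ _) (min_le_right _ _))) ?_
  intro z hz
  exact hρmin.trans_le
    (hbd z ⟨(le_max_right _ _).trans hz.1.le, hz.2.le.trans (min_le_right _ _)⟩).1

theorem stmt_6 (m M r ρmin ρmax : ℝ) (ρ : ℝ → ℝ)
    (hr : 0 < r) (hMm : M - m > 2 * r)
    (hρ0 : ∀ x, 0 ≤ ρ x) (hsupp : ∀ x, x ∉ Set.Icc m M → ρ x = 0)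
    (hint : IntegrableOn ρ (Set.Icc m M))
    (hρmin : 0 < ρmin) (hρmax : ρmin ≤ ρmax)
    (hbd : ∀ x ∈ Set.Icc m M, ρmin ≤ ρ x ∧ ρ x ≤ ρmax)
    (γ : ℝ → ℝ)
    (hγ : ∀ x, γ x = (∫ z in Set.Icc (x - r) (x + r) ∩ Set.Icc m M, z * ρ z) /
      (∫ z in Set.Icc (x - r) (x + r) ∩ Set.Icc m M, ρ z)) :
    ∀ x ∈ Set.Icc m M, ∀ y ∈ Set.Icc m M, x < y → γ x < γ y :=
  stmt_6_general m M r ρmin ρmax ρ hr hMm hint hρmin hbd γ hγ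
end

section
/- Let ρ : ℝ → ℝ be a nonnegative integrable density supported on [m, M] with 0 < ρ_min ≤ ρ ≤ ρ_max on [m, M], let r > 0 with M − m > 2r, and let γ be the HK flow map γ(x) = (∫_{I(x)} z ρ(z) dz)/(∫_{I(x)} ρ(z) dz), I(x) = [x−r, x+r] ∩ [m, M]. Then for x, y ∈ [m, M] with x < y and y − x ≥ 2r, γ(y) − γ(x) ≥ ((b−a) + (q−p)) / (1 + √(ρ_max/ρ_min)), where [a,b] = I(x) and [p,q] = I(y). -/
/-!
Write `k = √(ρmax / ρmin)` and `L = b - a`. Among densities between `ρmin` and `ρmax` on `[a, b]`,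
the mass average is pushed furthest to the right by `ρmin` on `[a, s]` and `ρmax` on `[s, b]`, and
this extremal density has its mass average exactly at the break point `s = b - L / (1 + k)`, since
`ρmin (s - a)² = ρmax (b - s)²` there. Hence every mass average over an interval of length `L`
stays `L / (1 + k)` away from both endpoints. If `y - x ≥ 2r`, the interval around `x` lies to
the left of the one around `y`, and the two gaps add up.
-/

open MeasureTheory

lemma setIntegral_Icc_eq_intervalIntegral {f : ℝ → ℝ} {a b : ℝ} (hab : a ≤ b) :
    ∫ z in Set.Icc a b, f z = ∫ z in a..b, f z := by
  rw [integral_Icc_eq_integral_Ioc, intervalIntegral.integral_of_le hab]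

noncomputable def massAverage (ρ : ℝ → ℝ) (a b : ℝ) : ℝ :=
  (∫ z in a..b, z * ρ z) / ∫ z in a..b, ρ z

lemma integral_const_mul_sub_id (c s a b : ℝ) :
    ∫ z in a..b, c * (s - z) = c * ((s - a) ^ 2 - (s - b) ^ 2) / 2 := by
  rw [intervalIntegral.integral_const_mul, intervalIntegral.integral_comp_sub_left (fun z => z),
    integral_id]
  ring

lemma le_integral_sub_mul {ρ : ℝ → ℝ} {a s b c₁ c₂ : ℝ} (has : a ≤ s) (hsb : s ≤ b)
    (hρ : IntervalIntegrable ρ volume a b)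
    (hlow : ∀ z ∈ Set.Icc a s, c₁ ≤ ρ z) (hup : ∀ z ∈ Set.Icc s b, ρ z ≤ c₂) :
    c₁ * (s - a) ^ 2 / 2 - c₂ * (b - s) ^ 2 / 2 ≤ ∫ z in a..b, (s - z) * ρ z := by
  have hs : s ∈ Set.uIcc a b := Set.mem_uIcc_of_le has hsb
  have hint : ∀ {u v}, Set.uIcc u v ⊆ Set.uIcc a b →
      IntervalIntegrable (fun z => (s - z) * ρ z) volume u v := fun huv =>
    (hρ.mono_set huv).continuousOn_mul (by fun_prop)
  have hlin : ∀ c u v, IntervalIntegrable (fun z => c * (s - z)) volume u v := fun c _ _ =>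
    (by fun_prop : Continuous fun z => c * (s - z)).intervalIntegrable _ _
  have hleft : c₁ * (s - a) ^ 2 / 2 ≤ ∫ z in a..s, (s - z) * ρ z := by
    calc c₁ * (s - a) ^ 2 / 2 = ∫ z in a..s, c₁ * (s - z) := by
          rw [integral_const_mul_sub_id]; ring
      _ ≤ _ := intervalIntegral.integral_mono_on has (hlin _ _ _)
          (hint (Set.uIcc_subset_uIcc_left hs)) fun z hz => by nlinarith [hlow z hz, hz.2]
  have hright : -(c₂ * (b - s) ^ 2 / 2) ≤ ∫ z in s..b, (s - z) * ρ z := by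
    calc -(c₂ * (b - s) ^ 2 / 2) = ∫ z in s..b, c₂ * (s - z) := by
          rw [integral_const_mul_sub_id]; ring
      _ ≤ _ := intervalIntegral.integral_mono_on hsb (hlin _ _ _)
          (hint (Set.uIcc_subset_uIcc_right hs)) fun z hz => by nlinarith [hup z hz, hz.1]
  rw [← intervalIntegral.integral_add_adjacent_intervals (hint (Set.uIcc_subset_uIcc_left hs))
    (hint (Set.uIcc_subset_uIcc_right hs))]
  linarith

lemma massAverage_le {ρ : ℝ → ℝ} {a b ρmin ρmax : ℝ} (hab : a < b)
    (hρ : IntervalIntegrable ρ volume a b) (hρmin : 0 < ρmin)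
    (hbd : ∀ z ∈ Set.Icc a b, ρmin ≤ ρ z ∧ ρ z ≤ ρmax) :
    massAverage ρ a b ≤ b - (b - a) / (1 + √(ρmax / ρmin)) := by
  set k := √(ρmax / ρmin)
  have hk : ρmin * k ^ 2 = ρmax := by
    have hρa := hbd a ⟨le_rfl, hab.le⟩
    rw [Real.sq_sqrt (div_nonneg (by linarith) hρmin.le), mul_div_cancel₀ _ hρmin.ne']
  have hk0 : 0 ≤ k := Real.sqrt_nonneg _
  set s := b - (b - a) / (1 + k) with hs
  have has : a ≤ s := by
    have : (b - a) / (1 + k) ≤ b - a := div_le_self (by linarith) (by linarith)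
    linarith
  have hsb : s ≤ b := sub_le_self _ (by positivity)
  have hbalance : ρmin * (s - a) ^ 2 / 2 - ρmax * (b - s) ^ 2 / 2 = 0 := by
    have hsa : s - a = (b - a) * k / (1 + k) := by rw [hs]; field_simp; ring
    have hbs : b - s = (b - a) / (1 + k) := by ring
    rw [hsa, hbs, ← hk]; field_simp; ring
  have hmoment := le_integral_sub_mul has hsb hρ (fun z hz => (hbd z ⟨hz.1, hz.2.trans hsb⟩).1)
    (fun z hz => (hbd z ⟨has.trans hz.1, hz.2⟩).2)
  have hmass : 0 < ∫ z in a..b, ρ z := intervalIntegral.intervalIntegral_pos_of_pos_on hρ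
    (fun z hz => hρmin.trans_le (hbd z (Set.Ioo_subset_Icc_self hz)).1) hab
  have hsplit : ∫ z in a..b, (s - z) * ρ z = s * (∫ z in a..b, ρ z) - ∫ z in a..b, z * ρ z := by
    simp only [sub_mul]
    rw [intervalIntegral.integral_sub (hρ.const_mul s)
      (hρ.continuousOn_mul (g := fun z => z) (by fun_prop)), intervalIntegral.integral_const_mul]
  rw [massAverage, div_le_iff₀ hmass]
  linarith

lemma massAverage_comp_neg (ρ : ℝ → ℝ) (a b : ℝ) :
    massAverage (fun z => ρ (-z)) (-b) (-a) = -massAverage ρ a b := by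
  have hnum : ∫ z in -b..-a, z * ρ (-z) = -∫ z in a..b, z * ρ z := by
    simp [← intervalIntegral.integral_comp_neg (fun z => z * ρ (-z))]
  simp [massAverage, hnum, intervalIntegral.integral_comp_neg (fun z => ρ z), neg_div]

lemma add_le_massAverage {ρ : ℝ → ℝ} {a b ρmin ρmax : ℝ} (hab : a < b)
    (hρ : IntervalIntegrable ρ volume a b) (hρmin : 0 < ρmin)
    (hbd : ∀ z ∈ Set.Icc a b, ρmin ≤ ρ z ∧ ρ z ≤ ρmax) :
    a + (b - a) / (1 + √(ρmax / ρmin)) ≤ massAverage ρ a b := by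
  have hreflected := massAverage_le (neg_lt_neg hab) ((IntervalIntegrable.iff_comp_neg).mp hρ).symm hρmin
    fun z hz => hbd (-z) ⟨le_neg.mpr hz.2, neg_le.mp hz.1⟩
  rw [massAverage_comp_neg, neg_sub_neg] at hreflected
  linarith

theorem stmt_9_general (m M r ρmin ρmax : ℝ) (ρ : ℝ → ℝ)
    (hr : 0 < r)
    (hint : IntegrableOn ρ (Set.Icc m M))
    (hρmin : 0 < ρmin)
    (hbd : ∀ x ∈ Set.Icc m M, ρmin ≤ ρ x ∧ ρ x ≤ ρmax)
    (γ : ℝ → ℝ)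
    (hγ : ∀ x, γ x = (∫ z in Set.Icc (x - r) (x + r) ∩ Set.Icc m M, z * ρ z) /
      (∫ z in Set.Icc (x - r) (x + r) ∩ Set.Icc m M, ρ z)) :
    ∀ x ∈ Set.Icc m M, ∀ y ∈ Set.Icc m M, x < y → y - x ≥ 2 * r →
      γ y - γ x ≥ ((min (x + r) M - max (x - r) m) + (min (y + r) M - max (y - r) m)) /
        (1 + Real.sqrt (ρmax / ρmin)) := by
  intro x hx y hy hxy hsep
  have hne : ∀ u ∈ Set.Icc m M, max (u - r) m < min (u + r) M := fun u hu =>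
    max_lt (lt_min (by linarith [hu.2]) (by linarith [hu.2]))
      (lt_min (by linarith [hu.1]) (by linarith [hx.1, hy.2]))
  have hsub : ∀ u, Set.Icc (max (u - r) m) (min (u + r) M) ⊆ Set.Icc m M := fun _ =>
    Set.Icc_subset_Icc (le_max_right _ _) (min_le_right _ _)
  have hγ_eq : ∀ u ∈ Set.Icc m M, γ u = massAverage ρ (max (u - r) m) (min (u + r) M) :=
    fun u hu => by
      rw [hγ, Set.Icc_inter_Icc, setIntegral_Icc_eq_intervalIntegral (hne u hu).le,
        setIntegral_Icc_eq_intervalIntegral (hne u hu).le, massAverage]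
  have hρ : ∀ u ∈ Set.Icc m M, IntervalIntegrable ρ volume (max (u - r) m) (min (u + r) M) :=
    fun u hu => (intervalIntegrable_iff_integrableOn_Icc_of_le (hne u hu).le).mpr
      (hint.mono_set (hsub u))
  have hx_le := massAverage_le (hne x hx) (hρ x hx) hρmin fun z hz => hbd z (hsub x hz)
  have hy_ge := add_le_massAverage (hne y hy) (hρ y hy) hρmin fun z hz => hbd z (hsub y hz)
  have hgap : min (x + r) M ≤ max (y - r) m :=
    (min_le_left _ _).trans (by linarith [le_max_left (y - r) m])
  rw [hγ_eq x hx, hγ_eq y hy, ge_iff_le, add_div]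
  linarith

theorem stmt_9 (m M r ρmin ρmax : ℝ) (ρ : ℝ → ℝ)
    (hr : 0 < r) (hMm : M - m > 2 * r)
    (hρ0 : ∀ x, 0 ≤ ρ x) (hsupp : ∀ x, x ∉ Set.Icc m M → ρ x = 0)
    (hint : IntegrableOn ρ (Set.Icc m M))
    (hρmin : 0 < ρmin) (hρmax : ρmin ≤ ρmax)
    (hbd : ∀ x ∈ Set.Icc m M, ρmin ≤ ρ x ∧ ρ x ≤ ρmax)
    (γ : ℝ → ℝ)
    (hγ : ∀ x, γ x = (∫ z in Set.Icc (x - r) (x + r) ∩ Set.Icc m M, z * ρ z) /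
      (∫ z in Set.Icc (x - r) (x + r) ∩ Set.Icc m M, ρ z)) :
    ∀ x ∈ Set.Icc m M, ∀ y ∈ Set.Icc m M, x < y → y - x ≥ 2 * r →
      γ y - γ x ≥ ((min (x + r) M - max (x - r) m) + (min (y + r) M - max (y - r) m)) /
        (1 + Real.sqrt (ρmax / ρmin)) :=
  stmt_9_general m M r ρmin ρmax ρ hr hint hρmin hbd γ hγ
end

section
/- Let x < y be reals, and let Ŝ₁, Ŝ₂, Ŝ₃, S₁, S₂, S₃ be reals with S₁ > 0, S₂ > 0, S₃ ≥ 0, S₂ + S₃ > 0, and suppose (Ŝ₃ + Ŝ₂)/(S₃ + S₂) ≥ Ŝ₂/S₂ (with the convention that this holds when S₃ = 0). Then (Ŝ₂ + Ŝ₃)/(S₂ + S₃) − (Ŝ₁ + Ŝ₂)/(S₁ + S₂) ≥ (S₁/(S₁ + S₂))·(Ŝ₂/S₂ − Ŝ₁/S₁). -/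
theorem stmt_10 (x y Shat₁ Shat₂ Shat₃ S₁ S₂ S₃ : ℝ) (hxy : x < y)
    (hS₁ : 0 < S₁) (hS₂ : 0 < S₂) (hS₃ : 0 ≤ S₃) (hS₂₃ : 0 < S₂ + S₃)
    (h : (Shat₃ + Shat₂) / (S₃ + S₂) ≥ Shat₂ / S₂) :
    (Shat₂ + Shat₃) / (S₂ + S₃) - (Shat₁ + Shat₂) / (S₁ + S₂) ≥
      (S₁ / (S₁ + S₂)) * (Shat₂ / S₂ - Shat₁ / S₁) := by
  have h' : (Shat₂ + Shat₃) / (S₂ + S₃) ≥ Shat₂ / S₂ := by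
    rwa [add_comm Shat₂, add_comm S₂]
  have key : (Shat₁ + Shat₂) / (S₁ + S₂) + (S₁ / (S₁ + S₂)) * (Shat₂ / S₂ - Shat₁ / S₁)
      = Shat₂ / S₂ := by
    field_simp
    ring
  linarith
end
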